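/- Let d be even, let n ≥ 3, and let τ₁, …, τₙ ∈ S_d be permutations of {1, …, d} such that τ₁τ₂⋯τₙ = id, the subgroup generated by τ₁, …, τₙ acts transitively on {1, …, d}, the total number of cycles of τ₁, …, τₙ (counting each fixed point as a cycle of length 1) equals (n−2)d + 2, and every cycle of τ₁ and every cycle of τ₂ has even length. Then there is a partition {1, …, d} = B ⊔ W with |B| = |W| = d/2 such that τ₁ and τ₂ each map B onto W and W onto B, while each of τ₃, …, τₙ maps B onto B and W onto W. -/

import Mathlib

/-- Multiset of cycle lengths of a permutation of a finite type, counting each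
fixed point as a cycle of length 1. -/
def fullCycleType {α : Type*} [Fintype α] [DecidableEq α] (τ : Equiv.Perm α) :
    Multiset ℕ :=
  τ.cycleType + Multiset.replicate (Fintype.card α - τ.cycleType.sum) 1

/-- The `n` partitions `parts 0, …, parts (n-1)` of `d` are realized by permutations:
there are `τ₁, …, τₙ ∈ S_d` with `τ₁ ⋯ τₙ = 1`, generating a subgroup acting
transitively on `{1, …, d}`, where the multiset of cycle lengths of `τᵢ`
(fixed points counting as cycles of length 1) is `parts i`. -/
def realizable (d n : ℕ) (parts : Fin n → Multiset ℕ) : Prop :=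
  ∃ τ : Fin n → Equiv.Perm (Fin d),
    (List.ofFn τ).prod = 1 ∧
    (∀ x y : Fin d, ∃ g ∈ Subgroup.closure (Set.range τ), g x = y) ∧
    ∀ i, fullCycleType (τ i) = parts i

/-!
Lift the tuple to the trivial double cover `α × ℤˣ`, letting `τ₁` and `τ₂` exchange the two sheets
and the other `τᵢ` preserve them; the lifts still multiply to `1`. Since `τ₁` and `τ₂` have only
even cycles, a sign alternating along their cycles conjugates their lifts to the sheet-preserving
ones, so every lift has exactly twice as many cycles as the permutation below it. The
Riemann–Hurwitz inequality `∑ᵢ (N - c(σᵢ)) ≥ 2 (N - #orbits)` for permutations with product `1`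
(write each `σᵢ` as `N - c(σᵢ)` transpositions; each transposition changes the number of cycles by
one and merges at most two orbits) then forces the lifted group to have at least two orbits. Such
an orbit meets every fibre of `α × ℤˣ → α` exactly once, and `B` is the set of points whose lift in
that orbit lies on the sheet `1`.
-/

open Equiv Equiv.Perm Subgroup

namespace Setoid

variable {β : Type*} {r s : Setoid β} {a b : β}

theorem card_quotient_le_of_le [Finite β] (h : r ≤ s) :
    Nat.card (Quotient s) ≤ Nat.card (Quotient r) :=
  Nat.card_le_card_of_surjective (map_of_le h) (Quotient.ind fun x => ⟨Quotient.mk r x, rfl⟩)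

theorem card_quotient_add_one_le_of_le [Finite β] (h : r ≤ s) (hs : s a b) (hr : ¬ r a b) :
    Nat.card (Quotient s) + 1 ≤ Nat.card (Quotient r) := by
  have := Fintype.ofFinite β
  classical
  rw [Nat.card_eq_fintype_card, Nat.card_eq_fintype_card, Nat.add_one_le_iff]
  refine Fintype.card_lt_of_surjective_not_injective (map_of_le h)
    (Quotient.ind fun x => ⟨Quotient.mk r x, rfl⟩) fun hinj => hr ?_
  exact Quotient.exact (@hinj (Quotient.mk r a) (Quotient.mk r b) (Quotient.sound hs))

theorem card_quotient_of_le_bot (h : r ≤ ⊥) : Nat.card (Quotient r) = Nat.card β := by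
  rw [le_bot_iff.1 h]
  exact Nat.card_congr quotientBotEquiv

theorem card_quotient_le_one [Finite β] (h : ∀ x y, r x y) : Nat.card (Quotient r) ≤ 1 :=
  Finite.card_le_one_iff_subsingleton.2 ⟨Quotient.ind₂ fun x y => Quotient.sound (h x y)⟩

def merge (r : Setoid β) (a b : β) : Setoid β where
  r x y := r x y ∨ (r x a ∨ r x b) ∧ (r y a ∨ r y b)
  iseqv := by
    refine ⟨fun x => .inl (r.refl x), ?_, ?_⟩
    · rintro x y (h | ⟨hx, hy⟩)
      exacts [.inl (r.symm h), .inr ⟨hy, hx⟩]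
    · rintro x y z (h | ⟨hx, hy⟩) (h' | ⟨hy', hz⟩)
      · exact .inl (r.trans h h')
      · exact .inr ⟨hy'.imp (r.trans h) (r.trans h), hz⟩
      · exact .inr ⟨hx, hy.imp (r.trans (r.symm h')) (r.trans (r.symm h'))⟩
      · exact .inr ⟨hx, hz⟩

theorem le_merge : r ≤ r.merge a b := fun _ _ h => .inl h

theorem merge_rel : r.merge a b a b := .inr ⟨.inl (r.refl a), .inr (r.refl b)⟩

theorem card_quotient_le_card_quotient_merge_add_one [Finite β] :
    Nat.card (Quotient r) ≤ Nat.card (Quotient (r.merge a b)) + 1 := by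
  classical
  rw [← Finite.card_option]
  refine Nat.card_le_card_of_injective
    (fun q => if r q.out a then none else some (Quotient.mk _ q.out)) fun q q' hqq' => ?_
  rw [← q.out_eq, ← q'.out_eq]
  apply Quotient.sound
  by_cases hq : r q.out a <;> by_cases hq' : r q'.out a <;> simp only [hq, hq', if_true,
    if_false, reduceCtorEq, Option.some_inj, Quotient.eq] at hqq'
  · exact r.trans hq (r.symm hq')
  · rcases hqq' with h | ⟨hx | hx, hy | hy⟩
    exacts [h, absurd hx hq, absurd hx hq, absurd hy hq', r.trans hx (r.symm hy)]

theorem rel_swap_apply [DecidableEq β] (h : r a b) (x : β) : r x (swap a b x) := by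
  rcases eq_or_ne x a with rfl | hxa
  · simpa using h
  rcases eq_or_ne x b with rfl | hxb
  · simpa using r.symm h
  · rw [swap_apply_of_ne_of_ne hxa hxb]

end Setoid

section Counting

variable {β : Type*}

noncomputable def numCycles (σ : Perm β) : ℕ :=
  Nat.card (Quotient (SameCycle.setoid σ))

noncomputable def numOrbits (H : Subgroup (Perm β)) : ℕ :=
  Nat.card (MulAction.orbitRel.Quotient H β)

theorem orbitRel_iff {H : Subgroup (Perm β)} {x y : β} :
    MulAction.orbitRel H β x y ↔ ∃ g ∈ H, g y = x := by
  simp [MulAction.orbitRel_apply, MulAction.mem_orbit_iff, Subgroup.smul_def, Perm.smul_def]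

theorem orbitRel_closure_le {S : Set (Perm β)} {s : Setoid β}
    (h : ∀ g ∈ S, ∀ x, s x (g x)) : MulAction.orbitRel (closure S) β ≤ s := by
  intro x y hxy
  obtain ⟨g, hg, rfl⟩ := orbitRel_iff.1 hxy
  refine s.symm (closure_induction (p := fun g _ => ∀ x, s x (g x)) h (fun x => s.refl x)
    (fun g g' _ _ hg hg' x => s.trans (hg' x) (hg (g' x))) (fun g _ hg x => ?_) hg y)
  simpa using s.symm (hg (g⁻¹ x))

theorem sameCycle_setoid_le {σ : Perm β} {s : Setoid β} (h : ∀ x, s x (σ x)) :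
    SameCycle.setoid σ ≤ s := by
  rintro x y ⟨k, rfl⟩
  refine s.symm <|
    orbitRel_closure_le (S := {σ}) (by simpa using h) (orbitRel_iff.2 ⟨σ ^ k, ?_, rfl⟩)
  rw [← zpowers_eq_closure]
  exact zpow_mem_zpowers σ k

theorem orbitRel_closure_insert_swap_le [DecidableEq β] {S : Set (Perm β)} {s : Setoid β}
    {a b : β} (hS : MulAction.orbitRel (closure S) β ≤ s) (hab : s a b) :
    MulAction.orbitRel (closure (insert (swap a b) S)) β ≤ s := by
  refine orbitRel_closure_le fun g hg x => ?_
  rcases hg with rfl | hg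
  · exact Setoid.rel_swap_apply hab x
  · exact s.symm (hS (orbitRel_iff.2 ⟨g, subset_closure hg, rfl⟩))

theorem sameCycle_setoid_le_of_swap_mul [DecidableEq β] {ρ : Perm β} {s : Setoid β} {a b : β}
    (hs : SameCycle.setoid (swap a b * ρ) ≤ s) (hab : s a b) : SameCycle.setoid ρ ≤ s :=
  sameCycle_setoid_le fun x =>
    s.trans (hs ⟨1, rfl⟩) (by simpa using Setoid.rel_swap_apply hab ((swap a b * ρ) x))

theorem numCycles_one : numCycles (1 : Perm β) = Nat.card β :=
  Setoid.card_quotient_of_le_bot fun _ _ h => sameCycle_one.1 h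

theorem numOrbits_bot : numOrbits (⊥ : Subgroup (Perm β)) = Nat.card β :=
  Setoid.card_quotient_of_le_bot fun x y h => by
    obtain ⟨g, hg, rfl⟩ := orbitRel_iff.1 h
    simp [mem_bot.1 hg]

theorem numCycles_conj (σ τ : Perm β) : numCycles (τ * σ * τ⁻¹) = numCycles σ :=
  Nat.card_congr (Quotient.congr τ fun x y => by
    change σ.SameCycle x y ↔ (τ * σ * τ⁻¹).SameCycle (τ x) (τ y)
    simp).symm

theorem numOrbits_le_of_le [Finite β] {H K : Subgroup (Perm β)} (h : H ≤ K) :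
    numOrbits K ≤ numOrbits H :=
  Setoid.card_quotient_le_of_le fun _ _ hxy =>
    have ⟨g, hg, hgx⟩ := orbitRel_iff.1 hxy
    orbitRel_iff.2 ⟨g, h hg, hgx⟩

section FullCycleType

variable [Fintype β] [DecidableEq β]

def cycleClass (σ : Perm β) (x : β) : σ.cycleFactorsFinset ⊕ Function.fixedPoints σ :=
  if h : σ x = x then .inr ⟨x, h⟩
  else .inl ⟨σ.cycleOf x, cycleOf_mem_cycleFactorsFinset_iff.2 (mem_support.2 h)⟩

theorem cycleClass_eq_iff (σ : Perm β) (x y : β) :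
    cycleClass σ x = cycleClass σ y ↔ σ.SameCycle x y := by
  refine ⟨fun h => ?_, fun h => ?_⟩
  · unfold cycleClass at h
    split_ifs at h with hx hy hy
    · rw [show x = y from congrArg Subtype.val (Sum.inr_injective h)]
    · have hsupp := (mem_support_cycleOf_iff' hy).2 (SameCycle.refl σ y)
      rw [← show σ.cycleOf x = σ.cycleOf y from congrArg Subtype.val (Sum.inl_injective h)]
        at hsupp
      exact ((mem_support_cycleOf_iff' hx).1 hsupp)
  · by_cases hx : σ x = x
    · rw [h.eq_of_left hx]
    · have hy : σ y ≠ y := by rwa [Ne, ← h.apply_eq_self_iff]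
      simp only [cycleClass, dif_neg hx, dif_neg hy, h.cycleOf_eq]

theorem cycleClass_surjective (σ : Perm β) : Function.Surjective (cycleClass σ) := by
  rintro (⟨c, hc⟩ | ⟨x, hx⟩)
  · obtain ⟨x, hx⟩ := (mem_cycleFactorsFinset_iff.1 hc).1.nonempty_support
    have hσx : σ x ≠ x := mem_support.1 (mem_cycleFactorsFinset_support_le hc hx)
    refine ⟨x, ?_⟩
    simp only [cycleClass, dif_neg hσx, cycle_is_cycleOf hx hc]
  · exact ⟨x, by simp only [cycleClass, dif_pos (show σ x = x from hx)]⟩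

theorem card_fullCycleType (σ : Perm β) : (fullCycleType σ).card = numCycles σ := by
  have hker : SameCycle.setoid σ = Setoid.ker (cycleClass σ) :=
    Setoid.ext fun x y => (cycleClass_eq_iff σ x y).symm
  rw [numCycles, hker, Nat.card_congr (Setoid.quotientKerEquivOfSurjective _
    (cycleClass_surjective σ)), Nat.card_sum, Nat.card_eq_fintype_card, Nat.card_eq_fintype_card,
    card_fixedPoints, fullCycleType, Multiset.card_add, Multiset.card_replicate, cycleType_def,
    Multiset.card_map, Fintype.card_coe]
  rfl

end FullCycleType

section RiemannHurwitz

variable [Finite β] [DecidableEq β] {ρ : Perm β} {a b : β}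

theorem sameCycle_swap_mul_of_not_sameCycle (h : ¬ ρ.SameCycle a b) :
    (swap a b * ρ).SameCycle a b := by
  set u := swap a b * ρ
  -- On the `ρ`-cycle of `a`, `u` agrees with `ρ` except that it sends `ρ⁻¹ a` to `b`.
  have hreach : ∀ j : ℕ, u.SameCycle ((ρ⁻¹ ^ (j + 1)) a) b := by
    intro j
    induction j with
    | zero => exact ⟨1, by simp [u]⟩
    | succ j ih =>
      set y := (ρ⁻¹ ^ (j + 2)) a
      have hy : ρ y = (ρ⁻¹ ^ (j + 1)) a := by simp [y, pow_succ']
      by_cases hya : ρ y = a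
      · exact ⟨1, by simp [u, hya]⟩
      have hyb : ρ y ≠ b := fun hyb =>
        h (hyb ▸ hy ▸ sameCycle_inv.1 (sameCycle_pow_right.2 (SameCycle.refl _ _)))
      have huy : u y = ρ y := by simp [u, swap_apply_of_ne_of_ne hya hyb]
      have hstep : u.SameCycle y (ρ y) := huy ▸ sameCycle_apply_right.2 (SameCycle.refl u y)
      exact hstep.trans (hy ▸ ih)
  simpa [Nat.sub_add_cancel (orderOf_pos ρ)] using hreach (orderOf ρ - 1)

theorem numCycles_swap_mul_add_one_le (h : ¬ ρ.SameCycle a b) :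
    numCycles (swap a b * ρ) + 1 ≤ numCycles ρ :=
  have hab := sameCycle_swap_mul_of_not_sameCycle h
  Setoid.card_quotient_add_one_le_of_le (sameCycle_setoid_le_of_swap_mul le_rfl hab) hab h

theorem numCycles_swap_mul_le : numCycles (swap a b * ρ) ≤ numCycles ρ + 1 :=
  Setoid.card_quotient_le_card_quotient_merge_add_one.trans <| Nat.add_le_add_right
    (Setoid.card_quotient_le_of_le
      (sameCycle_setoid_le_of_swap_mul Setoid.le_merge Setoid.merge_rel)) 1

theorem numCycles_add_one_le_swap_mul (h : ρ a ≠ a) :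
    numCycles ρ + 1 ≤ numCycles (swap a (ρ a) * ρ) := by
  have hfix : (swap a (ρ a) * ρ) a = a := by simp
  simpa [swap_mul_self_mul] using numCycles_swap_mul_add_one_le (b := ρ a)
    fun hsc => h (hsc.eq_of_left hfix).symm

theorem exists_swap_factorization (σ : Perm β) : ∃ L : List (Perm β),
    (∀ t ∈ L, t.IsSwap) ∧ L.prod = σ ∧ L.length + numCycles σ ≤ Nat.card β := by
  have := Fintype.ofFinite β
  induction h : σ.support.card using Nat.strong_induction_on generalizing σ with
  | _ n ih =>
  by_cases hσ : σ = 1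
  · exact ⟨[], by simp, by simp [hσ], by simp [hσ, numCycles_one]⟩
  obtain ⟨a, ha⟩ : ∃ a, σ a ≠ a := not_forall.1 fun h => hσ (Perm.ext h)
  obtain ⟨L, hLswap, hLprod, hLlen⟩ :=
    ih _ (h ▸ card_support_swap_mul ha) (swap a (σ a) * σ) rfl
  refine ⟨swap a (σ a) :: L, ?_, by rw [List.prod_cons, hLprod, swap_mul_self_mul], ?_⟩
  · simpa using ⟨⟨a, σ a, Ne.symm ha, rfl⟩, hLswap⟩
  · have := numCycles_add_one_le_swap_mul ha
    simp only [List.length_cons]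
    omega

theorem numOrbits_closure_le_insert_swap (S : Set (Perm β)) (a b : β) :
    numOrbits (closure S) ≤ numOrbits (closure (insert (swap a b) S)) + 1 :=
  Setoid.card_quotient_le_card_quotient_merge_add_one.trans <| Nat.add_le_add_right
    (Setoid.card_quotient_le_of_le
      (orbitRel_closure_insert_swap_le Setoid.le_merge Setoid.merge_rel)) 1

theorem numOrbits_closure_le_insert_swap_of_rel {S : Set (Perm β)}
    (hab : MulAction.orbitRel (closure S) β a b) :
    numOrbits (closure S) ≤ numOrbits (closure (insert (swap a b) S)) :=
  Setoid.card_quotient_le_of_le (orbitRel_closure_insert_swap_le le_rfl hab)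

theorem card_add_numCycles_prod_le (L : List (Perm β)) (hL : ∀ t ∈ L, t.IsSwap) :
    Nat.card β + numCycles L.prod ≤ L.length + 2 * numOrbits (closure {g | g ∈ L}) := by
  induction L with
  | nil => simp [numCycles_one, numOrbits_bot, two_mul]
  | cons t L ih =>
    obtain ⟨a, b, -, rfl⟩ := hL t List.mem_cons_self
    have ih := ih fun t ht => hL t (List.mem_cons_of_mem _ ht)
    have hset : {g | g ∈ swap a b :: L} = insert (swap a b) {g | g ∈ L} := by
      ext; simp
    rw [List.prod_cons, List.length_cons, hset]
    by_cases hab : MulAction.orbitRel (closure {g | g ∈ L}) β a b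
    · have := numOrbits_closure_le_insert_swap_of_rel hab
      have := numCycles_swap_mul_le (ρ := L.prod) (a := a) (b := b)
      omega
    · have hsc : ¬ L.prod.SameCycle a b := fun ⟨k, hk⟩ => hab <| orbitRel_iff.2
        ⟨(L.prod ^ k)⁻¹, inv_mem (zpow_mem (list_prod_mem fun g hg => subset_closure hg) k),
          by simp [← hk]⟩
      have := numOrbits_closure_le_insert_swap {g | g ∈ L} a b
      have := numCycles_swap_mul_add_one_le hsc
      omega

theorem riemann_hurwitz_inequality {n : ℕ} (τ : Fin n → Perm β) :
    Nat.card β + numCycles (List.ofFn τ).prod + ∑ i, numCycles (τ i) ≤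
      n * Nat.card β + 2 * numOrbits (closure (Set.range τ)) := by
  choose L hLswap hLprod hLlen using fun i => exists_swap_factorization (τ i)
  set M := (List.ofFn L).flatten
  have hMprod : M.prod = (List.ofFn τ).prod := by
    simp only [M, List.prod_flatten, List.map_ofFn]
    exact congrArg _ (congrArg _ (funext hLprod))
  have hMlen : M.length = ∑ i, (L i).length := by
    simp [M, List.length_flatten, List.map_ofFn, List.sum_ofFn]
  have hMorb : numOrbits (closure {g | g ∈ M}) ≤ numOrbits (closure (Set.range τ)) := by
    refine numOrbits_le_of_le (closure_le _ |>.2 ?_)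
    rintro _ ⟨i, rfl⟩
    rw [← hLprod i]
    exact list_prod_mem fun g hg => subset_closure (List.mem_flatten.2 ⟨L i, by simp, hg⟩)
  have hcore := card_add_numCycles_prod_le M fun t ht => by
    obtain ⟨_, hl, ht⟩ := List.mem_flatten.1 ht
    obtain ⟨i, rfl⟩ := List.mem_ofFn.1 hl
    exact hLswap i t ht
  have hlen : ∑ i, ((L i).length + numCycles (τ i)) ≤ n * Nat.card β := by
    simpa using Finset.sum_le_sum fun i (_ : i ∈ Finset.univ) => hLlen i
  rw [Finset.sum_add_distrib, ← hMlen] at hlen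
  rw [hMprod] at hcore
  omega

end RiemannHurwitz

end Counting

theorem list_prod_ofFn_mk {M N : Type*} [Monoid M] [Monoid N] {n : ℕ} (f : Fin n → M)
    (g : Fin n → N) :
    (List.ofFn fun i => (f i, g i)).prod = ((List.ofFn f).prod, (List.ofFn g).prod) :=
  Prod.ext (by simpa [List.map_ofFn, Function.comp_def] using
      map_list_prod (MonoidHom.fst M N) (List.ofFn fun i => (f i, g i)))
    (by simpa [List.map_ofFn, Function.comp_def] using
      map_list_prod (MonoidHom.snd M N) (List.ofFn fun i => (f i, g i)))

theorem exists_fst_eq_of_mem_closure {G H ι : Type*} [Group G] [Group H] {g : ι → G × H} {σ : G}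
    (hσ : σ ∈ closure (Set.range fun i => (g i).1)) : ∃ h ∈ closure (Set.range g), h.1 = σ := by
  rw [show (Set.range fun i => (g i).1) = MonoidHom.fst G H '' Set.range g from
    Set.range_comp _ _, ← MonoidHom.map_closure] at hσ
  obtain ⟨h, hh, rfl⟩ := hσ
  exact ⟨h, hh, rfl⟩

section DoubleCover

variable {α : Type*}

def doubleCover : Perm α × ℤˣ →* Perm (α × ℤˣ) where
  toFun g := g.1.prodCongr (Equiv.mulLeft g.2)
  map_one' := by ext <;> simp
  map_mul' g h := by ext <;> simp [mul_assoc]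

@[simp]
theorem doubleCover_apply (g : Perm α × ℤˣ) (p : α × ℤˣ) :
    doubleCover g p = (g.1 p.1, g.2 * p.2) := rfl

theorem numCycles_doubleCover_one (σ : Perm α) :
    numCycles (doubleCover (σ, 1)) = 2 * numCycles σ := by
  have : SameCycle.setoid (doubleCover (σ, 1)) = (SameCycle.setoid σ).prod ⊥ := by
    ext ⟨x, s⟩ ⟨y, u⟩
    change (∃ k : ℤ, (doubleCover (σ, 1) ^ k) (x, s) = (y, u)) ↔
      (∃ k : ℤ, (σ ^ k) x = y) ∧ s = u
    simp [← map_zpow, Prod.ext_iff]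
  rw [numCycles, this, ← Nat.card_congr (Setoid.prodQuotientEquiv _ _), Nat.card_prod,
    Nat.card_congr Setoid.quotientBotEquiv, Nat.card_eq_fintype_card (α := ℤˣ),
    Fintype.card_units_int, numCycles, mul_comm]

theorem numCycles_doubleCover {σ : Perm α} {e : ℤˣ} {φ : α → ℤˣ}
    (hφ : ∀ x, φ (σ x) = e * φ x) : numCycles (doubleCover (σ, e)) = 2 * numCycles σ := by
  let Ψ : Perm (α × ℤˣ) := Equiv.prodShear (Equiv.refl α) fun x => Equiv.mulLeft (φ x)
  have : doubleCover (σ, e) = Ψ⁻¹ * doubleCover (σ, 1) * Ψ⁻¹⁻¹ := by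
    rw [inv_inv, mul_assoc, eq_inv_mul_iff_mul_eq]
    refine Equiv.ext fun ⟨x, s⟩ => Prod.ext rfl ?_
    simp [Ψ, hφ, mul_mul_mul_comm e, Int.units_mul_self]
  rw [this, numCycles_conj, numCycles_doubleCover_one]

theorem exists_apply_eq_neg_of_even {σ : Perm α}
    (h : ∀ x (k : ℤ), (σ ^ k) x = x → Even k) :
    ∃ φ : α → ℤˣ, ∀ x, φ (σ x) = -φ x := by
  let rep (x : α) := (Quotient.mk (SameCycle.setoid σ) x).out
  have hrep (x : α) : σ.SameCycle (rep x) x := Quotient.mk_out (s := SameCycle.setoid σ) x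
  choose k hk using hrep
  refine ⟨fun x => (-1) ^ k x, fun x => ?_⟩
  have hrepσ : rep (σ x) = rep x :=
    congrArg Quotient.out (Quotient.sound (sameCycle_apply_left.2 (SameCycle.refl σ x)))
  have hpar : Even (k (σ x) - (k x + 1)) := by
    have hσx : (σ ^ (k x + 1)) (rep x) = σ x := by
      rw [add_comm, zpow_one_add, Perm.mul_apply, hk]
    refine h (σ x) _ ?_
    calc (σ ^ (k (σ x) - (k x + 1))) (σ x)
        = (σ ^ (k (σ x) - (k x + 1))) ((σ ^ (k x + 1)) (rep x)) := by rw [hσx]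
      _ = (σ ^ k (σ x)) (rep (σ x)) := by
        rw [← Perm.mul_apply, ← zpow_add, sub_add_cancel, hrepσ]
      _ = σ x := hk _
  calc (-1 : ℤˣ) ^ k (σ x) = (-1) ^ (k (σ x) - (k x + 1)) * (-1) ^ k x * (-1) := by
        rw [← zpow_add, ← zpow_add_one]; ring_nf
    _ = -(-1) ^ k x := by rw [hpar.neg_one_zpow]; simp

theorem even_of_zpow_apply_eq_self [Fintype α] [DecidableEq α] {σ : Perm α}
    (h : ∀ m ∈ fullCycleType σ, Even m) {x : α} {k : ℤ} (hk : (σ ^ k) x = x) : Even k := by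
  have hx : σ x ≠ x := by
    intro hx
    have hlt : σ.cycleType.sum < Fintype.card α := by
      rw [sum_cycleType]
      exact Finset.card_lt_univ_of_notMem (by simpa using hx)
    exact Nat.not_even_one (h 1 (Multiset.mem_add.2 (.inr (Multiset.mem_replicate.2
      ⟨by omega, rfl⟩))))
  have hcyc := σ.isCycle_cycleOf hx
  have hpow : σ.cycleOf x ^ MulAction.period σ x = 1 :=
    (hcyc.pow_eq_one_iff' (by rwa [cycleOf_apply_self])).2
      (by rw [cycleOf_pow_apply_self]; exact MulAction.pow_period_smul σ x)
  have heven : Even (σ.cycleOf x).support.card := h _ <| Multiset.mem_add.2 <| .inl <| by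
    rw [cycleType_def]
    exact Multiset.mem_map_of_mem _ (cycleOf_mem_cycleFactorsFinset_iff.2 (mem_support.2 hx))
  have hdvd := heven.two_dvd.trans (hcyc.orderOf ▸ orderOf_dvd_of_pow_eq_one hpow)
  exact even_iff_two_dvd.2 ((Int.natCast_dvd_natCast.2 hdvd).trans
    (MulAction.zpow_smul_eq_iff_period_dvd.1 hk))

theorem exists_sheet_of_one_lt_numOrbits [Finite α] {H : Subgroup (Perm α × ℤˣ)}
    (htrans : ∀ x y, ∃ h ∈ H, h.1 x = y) (hH : 1 < numOrbits (H.map doubleCover)) :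
    ∃ f : α → ℤˣ, ∀ h ∈ H, ∀ x, f (h.1 x) = h.2 * f x := by
  rcases isEmpty_or_nonempty α with hα | ⟨⟨x₀⟩⟩
  · exact ⟨isEmptyElim, fun _ _ x => isEmptyElim x⟩
  have hsep : ∀ h ∈ H, h.1 x₀ = x₀ → h.2 = 1 := by
    intro h₀ hh₀ hfix
    by_contra hsign
    refine hH.not_ge (Setoid.card_quotient_le_one fun p q => ?_)
    suffices hall : ∀ p : α × ℤˣ, MulAction.orbitRel (H.map doubleCover) _ p (x₀, 1) from
      (MulAction.orbitRel _ _).trans (hall p) ((MulAction.orbitRel _ _).symm (hall q))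
    rintro ⟨y, u⟩
    obtain ⟨k, hk, rfl⟩ := htrans x₀ y
    obtain ⟨k', hk', hfst, hsnd⟩ : ∃ k' ∈ H, k'.1 x₀ = k.1 x₀ ∧ k'.2 = u := by
      by_cases hu : k.2 = u
      · exact ⟨k, hk, rfl, hu⟩
      · refine ⟨k * h₀, mul_mem hk hh₀, by simp [hfix], ?_⟩
        simp [Int.units_ne_iff_eq_neg.1 hsign, Int.units_ne_iff_eq_neg.1 hu]
    exact orbitRel_iff.2 ⟨doubleCover k', mem_map_of_mem _ hk', by simp [hfst, hsnd]⟩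
  choose k hk hkx using htrans x₀
  refine ⟨fun y => (k y).2, fun h hh x => ?_⟩
  have hfix : ((k (h.1 x))⁻¹ * h * k x).1 x₀ = x₀ := by
    simp [Perm.mul_apply, hkx, Equiv.symm_apply_eq]
  have := hsep _ (mul_mem (mul_mem (inv_mem (hk _)) hh) (hk x)) hfix
  simpa only [Prod.snd_mul, Prod.snd_inv, mul_assoc, inv_mul_eq_one] using this

/-- The Riemann–Hurwitz count forces the double cover branched over `{i | ε i = -1}` to be
disconnected. -/
theorem exists_sheet_of_card_le_sum_numCycles [Fintype α] [DecidableEq α] {n : ℕ}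
    (τ : Fin n → Perm α) (ε : Fin n → ℤˣ) (hprod : (List.ofFn τ).prod = 1)
    (hε : ∏ i, ε i = 1)
    (htrans : ∀ x y : α, ∃ g ∈ closure (Set.range τ), g x = y)
    (hcycles : (n - 2) * Nat.card α + 2 ≤ ∑ i, numCycles (τ i))
    (heven : ∀ i, ε i ≠ 1 → ∀ m ∈ fullCycleType (τ i), Even m) :
    ∃ f : α → ℤˣ, ∀ i x, f (τ i x) = ε i * f x := by
  set g : Fin n → Perm α × ℤˣ := fun i => (τ i, ε i)
  have hgprod : (List.ofFn g).prod = 1 := by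
    rw [list_prod_ofFn_mk, hprod, List.prod_ofFn, hε, Prod.mk_one_one]
  have hcyc (i : Fin n) : numCycles (doubleCover (g i)) = 2 * numCycles (τ i) := by
    by_cases hi : ε i = 1
    · exact numCycles_doubleCover (φ := 1) fun x => by simp [hi]
    obtain ⟨φ, hφ⟩ :=
      exists_apply_eq_neg_of_even fun x k => even_of_zpow_apply_eq_self (heven i hi)
    exact numCycles_doubleCover (φ := φ) fun x => by simp [hφ, Int.units_ne_iff_eq_neg.1 hi]
  have hsum : ∑ i, numCycles ((doubleCover ∘ g) i) = 2 * ∑ i, numCycles (τ i) := by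
    rw [Finset.mul_sum]
    exact Finset.sum_congr rfl fun i _ => hcyc i
  have hRH := riemann_hurwitz_inequality (doubleCover ∘ g)
  rw [← List.map_ofFn, ← map_list_prod, hgprod, map_one, numCycles_one, hsum, Set.range_comp,
    ← MonoidHom.map_closure, Nat.card_prod, Nat.card_eq_fintype_card (α := ℤˣ),
    Fintype.card_units_int] at hRH
  have hn : n * Nat.card α ≤ (n - 2) * Nat.card α + 2 * Nat.card α := by
    rw [← add_mul]; exact Nat.mul_le_mul_right _ (by omega)
  have hlifttrans (x y : α) : ∃ h ∈ closure (Set.range g), h.1 x = y := by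
    obtain ⟨σ, hσ, rfl⟩ := htrans x y
    obtain ⟨h, hh, rfl⟩ := exists_fst_eq_of_mem_closure (g := g) hσ
    exact ⟨h, hh, rfl⟩
  obtain ⟨f, hf⟩ := exists_sheet_of_one_lt_numOrbits hlifttrans (by nlinarith)
  exact ⟨f, fun i => hf (g i) (subset_closure ⟨i, rfl⟩)⟩

end DoubleCover

theorem two_mul_card_eq_of_mem_iff_apply_notMem {α : Type*} [Fintype α] [DecidableEq α]
    (σ : Perm α) {B : Finset α} (h : ∀ x, x ∈ B ↔ σ x ∉ B) :
    2 * B.card = Fintype.card α := by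
  have hmap : B.map σ.toEmbedding = Bᶜ := by
    ext y
    rw [Finset.mem_map_equiv, h, Equiv.apply_symm_apply, Finset.mem_compl]
  have := congrArg Finset.card hmap
  rw [Finset.card_map, Finset.card_compl] at this
  have := B.card_le_univ
  omega

/-- Proposition 5.4, block decomposition form. Let `d` be
even, `τ₁ ⋯ τₙ = 1` in `S_d` with `⟨τ₁,…,τₙ⟩` transitive, total number of
cycles `(n−2)d + 2`, and all cycles of `τ₁, τ₂` of even length. Then
`{1,…,d}` splits as `B ⊔ W` with `|B| = |W| = d/2`, `τ₁, τ₂` interchanging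
`B` and `W` and `τ₃, …, τₙ` preserving them. -/
theorem stmt13 (d n : ℕ) (hn : 3 ≤ n)
    (τ : Fin n → Equiv.Perm (Fin d))
    (hprod : (List.ofFn τ).prod = 1)
    (htrans : ∀ x y : Fin d, ∃ g ∈ Subgroup.closure (Set.range τ), g x = y)
    (hcycles : ∑ i, (fullCycleType (τ i)).card = (n - 2) * d + 2)
    (h1 : ∀ x ∈ fullCycleType (τ ⟨0, by omega⟩), Even x)
    (h2 : ∀ x ∈ fullCycleType (τ ⟨1, by omega⟩), Even x) :
    ∃ B : Finset (Fin d), B.card = d / 2 ∧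
      (∀ x : Fin d, x ∈ B ↔ τ ⟨0, by omega⟩ x ∉ B) ∧
      (∀ x : Fin d, x ∈ B ↔ τ ⟨1, by omega⟩ x ∉ B) ∧
      (∀ i : Fin n, 2 ≤ (i : ℕ) → ∀ x : Fin d, x ∈ B ↔ τ i x ∈ B) := by
  let ε : Fin n → ℤˣ := fun i => if (i : ℕ) < 2 then -1 else 1
  have hε : ∏ i, ε i = 1 := by
    rw [Finset.prod_ite, Finset.prod_const, Finset.prod_const_one, Fin.card_filter_val_lt,
      min_eq_right (by omega)]
    rfl
  have heven : ∀ i, ε i ≠ 1 → ∀ m ∈ fullCycleType (τ i), Even m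
    | ⟨0, _⟩, _ => h1
    | ⟨1, _⟩, _ => h2
    | ⟨_ + 2, _⟩, hi => absurd (if_neg (by simp)) hi
  obtain ⟨f, hf⟩ := exists_sheet_of_card_le_sum_numCycles τ ε hprod hε htrans
    (by simpa [card_fullCycleType] using hcycles.ge) heven
  set B := Finset.univ.filter fun x => f x = 1
  have hswap (i : Fin n) (hi : (i : ℕ) < 2) (x : Fin d) : x ∈ B ↔ τ i x ∉ B := by
    have hεi : ε i = -1 := if_pos hi
    rcases Int.units_eq_one_or (f x) with hx | hx <;> simp [B, hf, hεi, hx]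
  have hpres (i : Fin n) (hi : 2 ≤ (i : ℕ)) (x : Fin d) : x ∈ B ↔ τ i x ∈ B := by
    have hεi : ε i = 1 := if_neg (Nat.not_lt.2 hi)
    simp [B, hf, hεi]
  refine ⟨B, ?_, hswap _ (by simp), hswap _ (by simp), hpres⟩
  have := two_mul_card_eq_of_mem_iff_apply_notMem _ (hswap ⟨0, by omega⟩ (by simp))
  rw [Fintype.card_fin] at this
  omega
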